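/- Lipschitz property of sparse networks (node-sparse version): consider networks g_Θ̄(x) := f^L[Θ̄^{L-1} ⋯ f¹[Θ̄⁰ x]] with depth L ≥ 1, where each f^j satisfies f^j(0)=0 and is 1-Lipschitz w.r.t. Euclidean norms. If Θ̄ = (Θ̄^{L-1},…,Θ̄⁰) and Γ̄ = (Γ̄^{L-1},…,Γ̄⁰) both satisfy max_j ‖Θ̄^j‖_{2,1} ≤ 1 and max_j ‖Γ̄^j‖_{2,1} ≤ 1, then for all x ∈ ℝ^d, ‖g_Θ̄(x) − g_Γ̄(x)‖₂ ≤ √L · ‖x‖₂ · ‖Θ̄ − Γ̄‖_F, where ‖Θ̄ − Γ̄‖_F := (∑_{j=0}^{L-1} ‖Θ̄^j − Γ̄^j‖_F²)^{1/2}. -/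

import Mathlib

/-!
Each layer's difference is at most the previous one plus `‖Θ̄ʲ - Γ̄ʲ‖_F ‖x‖`: the activation is
1-Lipschitz, `‖Θ̄ʲ y‖ ≤ ‖Θ̄ʲ‖_{2,1} ‖y‖ ≤ ‖y‖` (write `Θ̄ʲ y` as a combination of columns), and the
`Γ̄`-network never increases the norm of its input. Summing over the layers and applying
Cauchy–Schwarz to `∑ⱼ ‖Θ̄ʲ - Γ̄ʲ‖_F` gives the factor `√L`.
-/

/-- The ℓ2/ℓ1-norm of a matrix: sum over columns of the Euclidean column norms. -/
noncomputable def norm21 {a b : ℕ} (M : Matrix (Fin a) (Fin b) ℝ) : ℝ :=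
  ∑ k, Real.sqrt (∑ i, (M i k) ^ 2)

/-- The network `net j x = f^j[Θ^{j-1} ⋯ f¹[Θ⁰ x]]` (with `net 0 x = x`). -/
noncomputable def net (p : ℕ → ℕ)
    (Θ : ∀ k, Matrix (Fin (p (k + 1))) (Fin (p k)) ℝ)
    (f : ∀ k, EuclideanSpace ℝ (Fin (p k)) → EuclideanSpace ℝ (Fin (p k))) :
    (j : ℕ) → EuclideanSpace ℝ (Fin (p 0)) → EuclideanSpace ℝ (Fin (p j))
  | 0 => fun x => x
  | j + 1 => fun x => f (j + 1) (Matrix.toEuclideanLin (Θ j) (net p Θ f j x))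

open Finset

lemma Matrix.toEuclideanLin_apply_apply {𝕜 m n : Type*} [RCLike 𝕜] [Fintype n] [DecidableEq n]
    (M : Matrix m n 𝕜) (y : EuclideanSpace 𝕜 n) (i : m) :
    Matrix.toEuclideanLin M y i = ∑ k, M i k * y k := by
  simp [Matrix.toLpLin_apply, Matrix.mulVec, dotProduct]

lemma Matrix.norm_toEuclideanLin_le_sqrt_sum_sq {m n : Type*} [Fintype m] [Fintype n]
    [DecidableEq n] (M : Matrix m n ℝ) (y : EuclideanSpace ℝ n) :
    ‖Matrix.toEuclideanLin M y‖ ≤ √(∑ i, ∑ k, M i k ^ 2) * ‖y‖ := by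
  rw [EuclideanSpace.norm_eq, EuclideanSpace.norm_eq, ← Real.sqrt_mul (by positivity), sum_mul]
  refine Real.sqrt_le_sqrt (sum_le_sum fun i _ => ?_)
  simp only [Real.norm_eq_abs, sq_abs, Matrix.toEuclideanLin_apply_apply]
  exact sum_mul_sq_le_sq_mul_sq _ _ _

lemma Matrix.toEuclideanLin_eq_sum_smul_col {𝕜 m n : Type*} [RCLike 𝕜] [Fintype n]
    [DecidableEq n] (M : Matrix m n 𝕜) (y : EuclideanSpace 𝕜 n) :
    Matrix.toEuclideanLin M y = ∑ k, y k • WithLp.toLp 2 (fun i => M i k) := by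
  ext i
  simp [Matrix.toEuclideanLin_apply_apply, mul_comm]

lemma Matrix.norm_toEuclideanLin_le_norm21 {a b : ℕ} (M : Matrix (Fin a) (Fin b) ℝ)
    (y : EuclideanSpace ℝ (Fin b)) :
    ‖Matrix.toEuclideanLin M y‖ ≤ norm21 M * ‖y‖ := by
  rw [M.toEuclideanLin_eq_sum_smul_col, norm21, sum_mul]
  refine (norm_sum_le _ _).trans (sum_le_sum fun k _ => ?_)
  have hcol : ‖WithLp.toLp 2 (fun i => M i k)‖ = √(∑ i, M i k ^ 2) := by
    simp [EuclideanSpace.norm_eq]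
  rw [norm_smul, hcol, mul_comm]
  exact mul_le_mul_of_nonneg_left (PiLp.norm_apply_le y k) (Real.sqrt_nonneg _)

lemma Real.sum_sqrt_le_sqrt_card_mul_sqrt_sum {ι : Type*} (s : Finset ι) {a : ι → ℝ}
    (ha : ∀ i, 0 ≤ a i) : ∑ i ∈ s, √(a i) ≤ √(#s) * √(∑ i ∈ s, a i) := by
  simpa [mul_comm] using Real.sum_sqrt_mul_sqrt_le s ha (fun _ => zero_le_one)

section Network

variable {p : ℕ → ℕ} {Θ Γ : ∀ k, Matrix (Fin (p (k + 1))) (Fin (p k)) ℝ}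
  {f : ∀ k, EuclideanSpace ℝ (Fin (p k)) → EuclideanSpace ℝ (Fin (p k))}
  (x : EuclideanSpace ℝ (Fin (p 0)))

lemma norm_net_le (hf0 : ∀ k, f k 0 = 0) (hlip : ∀ k, LipschitzWith 1 (f k)) {j : ℕ}
    (hΓ : ∀ i < j, norm21 (Γ i) ≤ 1) : ‖net p Γ f j x‖ ≤ ‖x‖ := by
  induction j with
  | zero => rfl
  | succ j ih =>
    calc ‖net p Γ f (j + 1) x‖ ≤ ‖Matrix.toEuclideanLin (Γ j) (net p Γ f j x)‖ := by
          simpa [net] using (hlip (j + 1)).norm_le_mul (hf0 (j + 1)) _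
      _ ≤ norm21 (Γ j) * ‖net p Γ f j x‖ := (Γ j).norm_toEuclideanLin_le_norm21 _
      _ ≤ 1 * ‖x‖ := by
          gcongr
          exacts [hΓ j j.lt_succ_self, ih fun i hi => hΓ i (hi.trans j.lt_succ_self)]
      _ = ‖x‖ := one_mul _

lemma norm_net_succ_sub_net_succ_le (hf0 : ∀ k, f k 0 = 0) (hlip : ∀ k, LipschitzWith 1 (f k))
    {j : ℕ} (hΘ : norm21 (Θ j) ≤ 1) (hΓ : ∀ i < j, norm21 (Γ i) ≤ 1) :
    ‖net p Θ f (j + 1) x - net p Γ f (j + 1) x‖ ≤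
      ‖net p Θ f j x - net p Γ f j x‖ + √(∑ i, ∑ k, (Θ j i k - Γ j i k) ^ 2) * ‖x‖ := by
  set y := net p Θ f j x
  set z := net p Γ f j x
  have hsplit : Matrix.toEuclideanLin (Θ j) y - Matrix.toEuclideanLin (Γ j) z =
      Matrix.toEuclideanLin (Θ j) (y - z) + Matrix.toEuclideanLin (Θ j - Γ j) z := by
    simp only [map_sub, LinearMap.sub_apply]
    abel
  calc ‖net p Θ f (j + 1) x - net p Γ f (j + 1) x‖
      ≤ ‖Matrix.toEuclideanLin (Θ j) y - Matrix.toEuclideanLin (Γ j) z‖ := by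
        simpa [net, dist_eq_norm] using (hlip (j + 1)).dist_le_mul
          (Matrix.toEuclideanLin (Θ j) y) (Matrix.toEuclideanLin (Γ j) z)
    _ ≤ ‖Matrix.toEuclideanLin (Θ j) (y - z)‖ + ‖Matrix.toEuclideanLin (Θ j - Γ j) z‖ :=
        hsplit ▸ norm_add_le _ _
    _ ≤ norm21 (Θ j) * ‖y - z‖ + √(∑ i, ∑ k, (Θ j i k - Γ j i k) ^ 2) * ‖z‖ := by
        gcongr
        · exact (Θ j).norm_toEuclideanLin_le_norm21 _
        · simpa only [Matrix.sub_apply] using (Θ j - Γ j).norm_toEuclideanLin_le_sqrt_sum_sq z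
    _ ≤ 1 * ‖y - z‖ + √(∑ i, ∑ k, (Θ j i k - Γ j i k) ^ 2) * ‖x‖ := by
        gcongr
        exact norm_net_le x hf0 hlip hΓ
    _ = _ := by rw [one_mul]

lemma norm_net_sub_net_le (hf0 : ∀ k, f k 0 = 0) (hlip : ∀ k, LipschitzWith 1 (f k)) {L : ℕ}
    (hΘ : ∀ j < L, norm21 (Θ j) ≤ 1) (hΓ : ∀ j < L, norm21 (Γ j) ≤ 1) :
    ‖net p Θ f L x - net p Γ f L x‖ ≤
      ‖x‖ * ∑ j ∈ range L, √(∑ i, ∑ k, (Θ j i k - Γ j i k) ^ 2) := by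
  induction L with
  | zero => simp [net]
  | succ L ih =>
    have hΘL := fun j (hj : j < L) => hΘ j (hj.trans L.lt_succ_self)
    have hΓL := fun j (hj : j < L) => hΓ j (hj.trans L.lt_succ_self)
    rw [sum_range_succ, mul_add, mul_comm ‖x‖ (√_)]
    exact (norm_net_succ_sub_net_succ_le x hf0 hlip (hΘ L L.lt_succ_self) hΓL).trans
      (add_le_add_left (ih hΘL hΓL) _)

end Network

theorem net_lipschitz_node_sparse_general (L : ℕ) (p : ℕ → ℕ)
    (Θ Γ : ∀ k, Matrix (Fin (p (k + 1))) (Fin (p k)) ℝ)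
    (f : ∀ k, EuclideanSpace ℝ (Fin (p k)) → EuclideanSpace ℝ (Fin (p k)))
    (hf0 : ∀ k, f k 0 = 0) (hlip : ∀ k, LipschitzWith 1 (f k))
    (hΘ : ∀ j < L, norm21 (Θ j) ≤ 1) (hΓ : ∀ j < L, norm21 (Γ j) ≤ 1)
    (x : EuclideanSpace ℝ (Fin (p 0))) :
    ‖net p Θ f L x - net p Γ f L x‖ ≤
      Real.sqrt L * ‖x‖ *
        Real.sqrt (∑ j ∈ Finset.range L, ∑ i, ∑ k, (Θ j i k - Γ j i k) ^ 2) := by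
  have hCS := Real.sum_sqrt_le_sqrt_card_mul_sqrt_sum (range L)
    (a := fun j => ∑ i, ∑ k, (Θ j i k - Γ j i k) ^ 2) fun j => by positivity
  rw [card_range] at hCS
  calc ‖net p Θ f L x - net p Γ f L x‖
      ≤ ‖x‖ * ∑ j ∈ range L, √(∑ i, ∑ k, (Θ j i k - Γ j i k) ^ 2) :=
        norm_net_sub_net_le x hf0 hlip hΘ hΓ
    _ ≤ ‖x‖ * (√L * √(∑ j ∈ range L, ∑ i, ∑ k, (Θ j i k - Γ j i k) ^ 2)) := by gcongr
    _ = _ := by ring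

/-- Lipschitz property of node-sparse networks: if all activations
vanish at 0 and are 1-Lipschitz (Euclidean) and both parameters have all layerwise
ℓ2/ℓ1-norms at most 1, then
`‖g_Θ̄(x) − g_Γ̄(x)‖₂ ≤ √L ‖x‖₂ ‖Θ̄ − Γ̄‖_F`. -/
theorem net_lipschitz_node_sparse (L : ℕ) (hL : 1 ≤ L) (p : ℕ → ℕ)
    (Θ Γ : ∀ k, Matrix (Fin (p (k + 1))) (Fin (p k)) ℝ)
    (f : ∀ k, EuclideanSpace ℝ (Fin (p k)) → EuclideanSpace ℝ (Fin (p k)))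
    (hf0 : ∀ k, f k 0 = 0) (hlip : ∀ k, LipschitzWith 1 (f k))
    (hΘ : ∀ j < L, norm21 (Θ j) ≤ 1) (hΓ : ∀ j < L, norm21 (Γ j) ≤ 1)
    (x : EuclideanSpace ℝ (Fin (p 0))) :
    ‖net p Θ f L x - net p Γ f L x‖ ≤
      Real.sqrt L * ‖x‖ *
        Real.sqrt (∑ j ∈ Finset.range L, ∑ i, ∑ k, (Θ j i k - Γ j i k) ^ 2) :=
  net_lipschitz_node_sparse_general L p Θ Γ f hf0 hlip hΘ hΓ x
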